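/- For all α, β ∈ ℂ, every prime p and all integers u, v ≥ 0: σ_{α,β}(p^u)·σ_{α,β}(p^v) = ∑_{j=0}^{min(u,v)} p^{−j(α+β)} σ_{α,β}(p^{u+v−2j}). -/
import Mathlib


open Complex

/-- `σ_{α,β}(n) = ∑_{ad=n} a^{-α} d^{-β}`. -/
noncomputable def sigmaC (α β : ℂ) (n : ℕ) : ℂ :=
  ∑ d ∈ n.divisors, ((n / d : ℕ) : ℂ) ^ (-α) * (d : ℂ) ^ (-β)

/-- Auxiliary: the "homogeneous geometric sum" `∑_{i=0}^n x^{n-i} y^i`. -/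
noncomputable def Saux (x y : ℂ) (n : ℕ) : ℂ :=
  ∑ i ∈ Finset.range (n + 1), x ^ (n - i) * y ^ i

lemma Saux_symm (x y : ℂ) (n : ℕ) : Saux x y n = Saux y x n := by
  unfold Saux
  rw [← Finset.sum_range_reflect]
  refine Finset.sum_congr rfl fun i hi => ?_
  rw [Finset.mem_range] at hi
  have h1 : n - (n + 1 - 1 - i) = i := by omega
  have h2 : n + 1 - 1 - i = n - i := by omega
  rw [h1, h2, mul_comm]

lemma Saux_succ (x y : ℂ) (n : ℕ) : Saux x y (n + 1) = x * Saux x y n + y ^ (n + 1) := by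
  unfold Saux
  rw [Finset.sum_range_succ, Finset.mul_sum]
  congr 1
  · refine Finset.sum_congr rfl fun i hi => ?_
    rw [Finset.mem_range] at hi
    have : n + 1 - i = (n - i) + 1 := by omega
    rw [this, pow_succ]
    ring
  · simp

lemma Saux_mul (x y : ℂ) : ∀ u v : ℕ, u ≤ v →
    Saux x y u * Saux x y v
      = ∑ j ∈ Finset.range (u + 1), (x * y) ^ j * Saux x y (u + v - 2 * j) := by
  intro u
  induction u with
  | zero => intro v hv; simp [Saux]
  | succ u ih =>
    intro v hv
    have huv : u ≤ v := by omega
    have h1 : x * ∑ j ∈ Finset.range (u + 1), (x * y) ^ j * Saux x y (u + v - 2 * j)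
        = ∑ j ∈ Finset.range (u + 1), (x * y) ^ j * Saux x y (u + 1 + v - 2 * j)
          - ∑ j ∈ Finset.range (u + 1), x ^ j * y ^ (u + 1 + v - j) := by
      rw [Finset.mul_sum, ← Finset.sum_sub_distrib]
      refine Finset.sum_congr rfl fun j hj => ?_
      rw [Finset.mem_range] at hj
      have e1 : u + 1 + v - 2 * j = (u + v - 2 * j) + 1 := by omega
      rw [e1, Saux_succ]
      have e2 : j + (u + v - 2 * j + 1) = u + 1 + v - j := by omega
      have h2 : (x * y) ^ j * y ^ (u + v - 2 * j + 1) = x ^ j * y ^ (u + 1 + v - j) := by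
        rw [mul_pow, mul_assoc, ← pow_add, e2]
      rw [mul_add, h2]
      ring
    have h2' : y ^ (u + 1) * Saux x y v
        = ∑ j ∈ Finset.range (v + 1), x ^ j * y ^ (u + 1 + v - j) := by
      unfold Saux
      rw [Finset.mul_sum,
        ← Finset.sum_range_reflect (fun j => x ^ j * y ^ (u + 1 + v - j)) (v + 1)]
      refine Finset.sum_congr rfl fun i hi => ?_
      rw [Finset.mem_range] at hi
      have e1 : v + 1 - 1 - i = v - i := by omega
      have e2 : u + 1 + v - (v - i) = (u + 1) + i := by omega
      rw [e1, e2, pow_add]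
      ring
    have h3 : ∑ j ∈ Finset.range (v + 1), x ^ j * y ^ (u + 1 + v - j)
        = ∑ j ∈ Finset.range (u + 1), x ^ j * y ^ (u + 1 + v - j)
          + ∑ j ∈ Finset.Ico (u + 1) (v + 1), x ^ j * y ^ (u + 1 + v - j) := by
      simp only [Finset.range_eq_Ico]
      rw [Finset.sum_Ico_consecutive _ (Nat.zero_le (u + 1)) (by omega)]
    have h4 : ∑ j ∈ Finset.Ico (u + 1) (v + 1), x ^ j * y ^ (u + 1 + v - j)
        = (x * y) ^ (u + 1) * Saux x y (u + 1 + v - 2 * (u + 1)) := by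
      have hn : u + 1 + v - 2 * (u + 1) = v - (u + 1) := by omega
      rw [Finset.sum_Ico_eq_sum_range]
      have hd : v + 1 - (u + 1) = v - (u + 1) + 1 := by omega
      rw [hd, hn]
      unfold Saux
      rw [Finset.mul_sum,
        ← Finset.sum_range_reflect
          (fun j => x ^ (u + 1 + j) * y ^ (u + 1 + v - (u + 1 + j))) (v - (u + 1) + 1)]
      refine Finset.sum_congr rfl fun m hm => ?_
      rw [Finset.mem_range] at hm
      have e1 : u + 1 + (v - (u + 1) + 1 - 1 - m) = (u + 1) + (v - (u + 1) - m) := by omega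
      have e2 : u + 1 + v - (u + 1 + (v - (u + 1) + 1 - 1 - m)) = (u + 1) + m := by omega
      rw [e2, e1, pow_add, pow_add, mul_pow]
      ring
    have h5 : ∑ j ∈ Finset.range (u + 1 + 1), (x * y) ^ j * Saux x y (u + 1 + v - 2 * j)
        = ∑ j ∈ Finset.range (u + 1), (x * y) ^ j * Saux x y (u + 1 + v - 2 * j)
          + (x * y) ^ (u + 1) * Saux x y (u + 1 + v - 2 * (u + 1)) :=
      Finset.sum_range_succ _ _
    rw [Saux_succ, add_mul, mul_assoc, ih v huv, h1, h2', h3, h4, h5]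
    ring

lemma natpow_cpow (p m : ℕ) (w : ℂ) : ((p : ℂ) ^ m) ^ w = ((p : ℂ) ^ w) ^ m := by
  have ha : Complex.arg (p : ℂ) = 0 := Complex.natCast_arg
  rw [← Complex.cpow_nat_mul' (by simp [ha]; positivity) (by simp [ha]; positivity),
    Complex.cpow_nat_mul]

lemma sigmaC_prime_pow (α β : ℂ) {p : ℕ} (hp : p.Prime) (n : ℕ) :
    sigmaC α β (p ^ n) = Saux ((p : ℂ) ^ (-α)) ((p : ℂ) ^ (-β)) n := by
  unfold sigmaC Saux
  rw [Nat.sum_divisors_prime_pow hp]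
  refine Finset.sum_congr rfl fun i hi => ?_
  rw [Finset.mem_range] at hi
  have hpd : p ^ n / p ^ i = p ^ (n - i) := Nat.pow_div (by omega) hp.pos
  rw [hpd]
  push_cast
  rw [natpow_cpow, natpow_cpow]

/-- For all `α, β ∈ ℂ`, every prime `p` and all integers `u, v ≥ 0`:
`σ_{α,β}(p^u)·σ_{α,β}(p^v) = ∑_{j=0}^{min(u,v)} p^{−j(α+β)} σ_{α,β}(p^{u+v−2j})`. -/
theorem sigma_prime_pow_mul (α β : ℂ) (p : ℕ) (hp : p.Prime) (u v : ℕ) :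
    sigmaC α β (p ^ u) * sigmaC α β (p ^ v) =
      ∑ j ∈ Finset.range (min u v + 1),
        (p : ℂ) ^ (-(j : ℂ) * (α + β)) * sigmaC α β (p ^ (u + v - 2 * j)) := by
  have hp0 : (p : ℂ) ≠ 0 := by exact_mod_cast hp.ne_zero
  have hcp : ∀ j : ℕ, (p : ℂ) ^ (-(j : ℂ) * (α + β))
      = ((p : ℂ) ^ (-α) * (p : ℂ) ^ (-β)) ^ j := by
    intro j
    have : -(j : ℂ) * (α + β) = (j : ℕ) * (-(α + β)) := by ring
    rw [this, Complex.cpow_nat_mul, neg_add, Complex.cpow_add _ _ hp0]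
  set x := (p : ℂ) ^ (-α)
  set y := (p : ℂ) ^ (-β)
  have key : ∀ a b : ℕ, a ≤ b →
      sigmaC α β (p ^ a) * sigmaC α β (p ^ b) =
        ∑ j ∈ Finset.range (min a b + 1),
          (p : ℂ) ^ (-(j : ℂ) * (α + β)) * sigmaC α β (p ^ (a + b - 2 * j)) := by
    intro a b hab
    rw [Nat.min_eq_left hab, sigmaC_prime_pow α β hp, sigmaC_prime_pow α β hp,
      Saux_mul x y a b hab]
    refine Finset.sum_congr rfl fun j hj => ?_
    rw [hcp j, sigmaC_prime_pow α β hp]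
  rcases le_total u v with h | h
  · exact key u v h
  · rw [mul_comm, key v u h, Nat.min_comm, Nat.add_comm v u]
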